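/- Let $h : [n] \to [n]$ be a Hessenberg function (nondecreasing with $h(i) \ge i$ for all $i$), and for $1 \le i \le n$ let $a_i = |\{j < i : h(j) \ge i\}|$ (the number of cells strictly above the diagonal in row $i$ of the associated Dyck path region). For a positive integer $\alpha$, call a word $\sigma \in \{0,1,\dots,\alpha-1\}^n$ a proper coloring if $\sigma_i \ne \sigma_j$ whenever $i < j \le h(i)$. Then $\sum_{\sigma \text{ proper}} q^{\mathrm{inv}_h(\sigma) + \sigma_1 + \cdots + \sigma_n} = \prod_{i=1}^n (q^{\alpha} - q^{a_i})/(q-1)$, where $\mathrm{inv}_h(\sigma) = |\{(i,j) : i < j \le h(i),\ \sigma_i > \sigma_j\}|$. -/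

import Mathlib

/-!
Colour the vertices from left to right. The earlier neighbours of vertex `i` are the `j < i`
with `h j > i`; any two of them attack each other (`j < j' < i < h j`), so a proper colouring
gives them `a i` distinct colours `S`. Colouring `i` with `c ∉ S` adds `c` to the colour sum and
`#{s ∈ S | c < s}` inversions, and `c ↦ c + #{s ∈ S | c < s}` maps the `α - a i` free colours
bijectively onto `a i, …, α - 1`. So vertex `i` contributes the factor `q ^ a i [α - a i]_q`
whatever the earlier colouring was.
-/

open scoped Classical
open Finset

theorem RatFunc.X_ne_one {K : Type*} [Field K] : (RatFunc.X : RatFunc K) ≠ 1 := by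
  intro h
  simpa using congrArg RatFunc.intDegree h

theorem sum_card_filter_lt_eq_sum_range {β M : Type*} [LinearOrder β] [AddCommMonoid M]
    (s : Finset β) (f : ℕ → M) : ∑ x ∈ s, f #{y ∈ s | y < x} = ∑ k ∈ range #s, f k := by
  induction s using Finset.induction_on_max with
  | empty => simp
  | insert a s ha ih =>
    have hnot : a ∉ s := fun h => (ha a h).false
    have hrank : #{y ∈ insert a s | y < a} = #s := by
      rw [filter_insert, if_neg (lt_irrefl a), filter_true_of_mem ha]
    rw [sum_insert hnot, card_insert_of_notMem hnot, sum_range_succ, add_comm, hrank, ← ih]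
    congr 1
    refine sum_congr rfl fun x hx => ?_
    rw [filter_insert, if_neg (ha x hx).asymm]

theorem val_add_card_filter_gt {α : ℕ} {S : Finset (Fin α)} {c : Fin α} (hc : c ∉ S) :
    (c : ℕ) + #{s ∈ S | c < s} = #S + #{x ∈ Sᶜ | x < c} := by
  have hbelow : #{x ∈ S | x < c} + #{x ∈ Sᶜ | x < c} = c := by
    rw [← card_union_of_disjoint (disjoint_filter_filter disjoint_compl_right), ← filter_union,
      union_compl, ← Fin.card_Iio c]
    congr 1; ext; simp
  have hsplit : #{x ∈ S | x < c} + #{s ∈ S | c < s} = #S := by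
    rw [← card_filter_add_card_filter_not (p := (· < c)) (s := S)]
    congr 2; ext x; simp only [mem_filter, not_lt]
    exact and_congr_right fun hx => ((ne_of_mem_of_not_mem hx hc).symm.le_iff_lt).symm
  omega

theorem sum_compl_pow_val_add_card_filter_gt {K : Type*} [Field K] {q : K} (hq : q ≠ 1) {α : ℕ}
    (S : Finset (Fin α)) :
    ∑ c ∈ Sᶜ, q ^ ((c : ℕ) + #{s ∈ S | c < s}) = (q ^ α - q ^ #S) / (q - 1) := by
  have hα : q ^ α = q ^ #S * q ^ #Sᶜ := by rw [← pow_add, card_add_card_compl, Fintype.card_fin]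
  calc ∑ c ∈ Sᶜ, q ^ ((c : ℕ) + #{s ∈ S | c < s})
      = ∑ c ∈ Sᶜ, q ^ #S * q ^ #{x ∈ Sᶜ | x < c} :=
        sum_congr rfl fun c hc => by rw [val_add_card_filter_gt (mem_compl.mp hc), pow_add]
    _ = q ^ #S * ((q ^ #Sᶜ - 1) / (q - 1)) := by
        rw [← mul_sum, sum_card_filter_lt_eq_sum_range Sᶜ (q ^ ·), geom_sum_eq hq]
    _ = (q ^ α - q ^ #S) / (q - 1) := by rw [hα]; ring

section Hessenberg

variable {n α : ℕ}

def properColorings (h : Fin n → ℕ) (α : ℕ) : Finset (Fin n → Fin α) :=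
  (Finset.univ : Finset (Fin n → Fin α)).filter
    (fun σ => ∀ i j : Fin n, i < j → (j : ℕ) < h i → σ i ≠ σ j)

def inversions (h : Fin n → ℕ) (σ : Fin n → Fin α) : ℕ :=
  (Finset.univ.filter
    (fun p : Fin n × Fin n => p.1 < p.2 ∧ (p.2 : ℕ) < h p.1 ∧ σ p.2 < σ p.1)).card

def earlierAttackers (h : Fin n → ℕ) (i : Fin n) : Finset (Fin n) :=
  Finset.univ.filter (fun j : Fin n => j < i ∧ (i : ℕ) < h j)

def lastAttackers (h : Fin (n + 1) → ℕ) : Finset (Fin n) := {j | n < h j.castSucc}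

theorem earlierAttackers_castSucc (h : Fin (n + 1) → ℕ) (i : Fin n) :
    earlierAttackers h i.castSucc = (earlierAttackers (Fin.init h) i).map Fin.castSuccEmb := by
  ext j
  simp only [earlierAttackers, mem_map, mem_filter, mem_univ, true_and]
  cases j using Fin.lastCases <;> simp [Fin.init, (Fin.castSucc_lt_last _).not_gt]

theorem earlierAttackers_last (h : Fin (n + 1) → ℕ) :
    earlierAttackers h (Fin.last n) = (lastAttackers h).map Fin.castSuccEmb := by
  ext j
  cases j using Fin.lastCases <;> simp [earlierAttackers, lastAttackers]

theorem injOn_lastAttackers {h : Fin (n + 1) → ℕ} {τ : Fin n → Fin α}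
    (hτ : τ ∈ properColorings (Fin.init h) α) : Set.InjOn τ (lastAttackers h) := by
  simp only [properColorings, mem_filter, mem_univ, true_and] at hτ
  intro i hi j hj hij
  simp only [lastAttackers, coe_filter, mem_univ, true_and, Set.mem_ofPred_eq] at hi hj
  by_contra hne
  rcases lt_or_gt_of_ne hne with hlt | hlt
  · exact hτ i j hlt (j.isLt.trans hi) hij
  · exact hτ j i hlt (i.isLt.trans hj) hij.symm

theorem snoc_mem_properColorings_iff {h : Fin (n + 1) → ℕ} {τ : Fin n → Fin α} {c : Fin α} :
    Fin.snoc τ c ∈ properColorings h α ↔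
      τ ∈ properColorings (Fin.init h) α ∧ c ∉ (lastAttackers h).image τ := by
  simp only [properColorings, mem_filter, mem_univ, true_and]
  simp [lastAttackers, Fin.forall_fin_succ', Fin.init, forall_and, not_lt.mpr (Fin.le_last _)]

theorem inversions_snoc (h : Fin (n + 1) → ℕ) (τ : Fin n → Fin α) (c : Fin α) :
    inversions h (Fin.snoc τ c) = inversions (Fin.init h) τ + #{j ∈ lastAttackers h | c < τ j} := by
  rw [inversions, inversions, lastAttackers, filter_filter, card_filter, card_filter, card_filter]
  simp only [ite_and]
  simp [Fintype.sum_prod_type, Fin.sum_univ_castSucc, not_lt.mpr (Fin.le_last _), sum_add_distrib]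
  -- the two sides differ only by `Fin.init h j = h j.castSucc` inside decidability instances
  rfl

theorem sum_properColorings_succ {M : Type*} [AddCommMonoid M] (h : Fin (n + 1) → ℕ)
    (f : (Fin (n + 1) → Fin α) → M) :
    ∑ σ ∈ properColorings h α, f σ =
      ∑ τ ∈ properColorings (Fin.init h) α, ∑ c ∈ ((lastAttackers h).image τ)ᶜ, f (Fin.snoc τ c) := by
  rw [← sum_ite_mem_eq, ← (Fin.snocEquiv fun _ => Fin α).sum_comp, Fintype.sum_prod_type_right,
    ← sum_ite_mem_eq (properColorings (Fin.init h) α)]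
  simp only [Fin.snocEquiv, Equiv.coe_fn_mk, snoc_mem_properColorings_iff, ite_and]
  refine sum_congr rfl fun τ _ => ?_
  split_ifs <;> simp only [← mem_compl, sum_ite_mem_eq, sum_const_zero]

theorem sum_properColorings_pow_eq_prod {K : Type*} [Field K] {q : K} (hq : q ≠ 1) :
    ∀ {n : ℕ} (h : Fin n → ℕ),
      ∑ σ ∈ properColorings h α, q ^ (inversions h σ + ∑ i, (σ i : ℕ)) =
        ∏ i, (q ^ α - q ^ #(earlierAttackers h i)) / (q - 1)
  | 0, h => by simp [properColorings, inversions]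
  | n + 1, h => by
    simp_rw [sum_properColorings_succ, Fin.prod_univ_castSucc, earlierAttackers_castSucc,
      earlierAttackers_last, card_map, ← sum_properColorings_pow_eq_prod hq (Fin.init h), sum_mul]
    refine sum_congr rfl fun τ hτ => ?_
    have hinj := injOn_lastAttackers hτ
    rw [← card_image_of_injOn hinj, ← sum_compl_pow_val_add_card_filter_gt hq, mul_sum]
    refine sum_congr rfl fun c _ => ?_
    have hgt : #{j ∈ lastAttackers h | c < τ j} = #{s ∈ (lastAttackers h).image τ | c < s} := by
      rw [filter_image, card_image_of_injOn (hinj.mono (filter_subset _ _))]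
    rw [inversions_snoc, Fin.sum_univ_castSucc, Fin.snoc_last, hgt, ← pow_add]
    simp only [Fin.snoc_castSucc]
    ring

end Hessenberg

/-- Indices are `0`-based: vertex `i : Fin n` is the paper's vertex `i + 1`, `h i` is the
(1-based) value of the Hessenberg function, `i < j` attack iff `(j : ℕ) < h i`, and
`a i = #{j < i : h j ≥ i + 1}`. -/
theorem chromatic_principal_specialization_general (n : ℕ) (h : Fin n → ℕ) (α : ℕ) :
    ∑ σ ∈ (Finset.univ : Finset (Fin n → Fin α)).filter
        (fun σ => ∀ i j : Fin n, i < j → (j : ℕ) < h i → σ i ≠ σ j),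
      (RatFunc.X : RatFunc ℚ) ^
        ((Finset.univ.filter
            (fun p : Fin n × Fin n => p.1 < p.2 ∧ (p.2 : ℕ) < h p.1 ∧ σ p.2 < σ p.1)).card
          + ∑ i : Fin n, (σ i : ℕ))
    = ∏ i : Fin n,
        ((RatFunc.X : RatFunc ℚ) ^ α -
            RatFunc.X ^
              ((Finset.univ.filter (fun j : Fin n => j < i ∧ (i : ℕ) < h j)).card)) /
          (RatFunc.X - 1) :=
  sum_properColorings_pow_eq_prod RatFunc.X_ne_one h

/-- Principal specialization of the Shareshian–Wachs chromatic quasisymmetric function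
of a Hessenberg function factors as a product.  Here indices are `0`-based: vertex
`i : Fin n` corresponds to `i+1`, `h i` is the (1-based) value of the Hessenberg
function, `i < j` attack iff `(j : ℕ) < h i`, and
`a i = #{j < i : h j ≥ i + 1}`. -/
theorem chromatic_principal_specialization (n : ℕ) (hn : 1 ≤ n) (h : Fin n → ℕ)
    (hmono : Monotone h) (hh : ∀ i : Fin n, (i : ℕ) < h i ∧ h i ≤ n)
    (α : ℕ) (hα : 0 < α) :
    ∑ σ ∈ (Finset.univ : Finset (Fin n → Fin α)).filter
        (fun σ => ∀ i j : Fin n, i < j → (j : ℕ) < h i → σ i ≠ σ j),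
      (RatFunc.X : RatFunc ℚ) ^
        ((Finset.univ.filter
            (fun p : Fin n × Fin n => p.1 < p.2 ∧ (p.2 : ℕ) < h p.1 ∧ σ p.2 < σ p.1)).card
          + ∑ i : Fin n, (σ i : ℕ))
    = ∏ i : Fin n,
        ((RatFunc.X : RatFunc ℚ) ^ α -
            RatFunc.X ^
              ((Finset.univ.filter (fun j : Fin n => j < i ∧ (i : ℕ) < h j)).card)) /
          (RatFunc.X - 1) :=
  chromatic_principal_specialization_general n h α
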